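/- arXiv:2510.04497 — 6 statements merged into one kernel-verified Lean document; each statement's English description precedes it below -/
import Mathlib

section
/- Let G be a finite group and K a subgroup. The Hecke algebra H(G,K) = ε_K ℂ[G] ε_K is commutative (i.e. ab = ba for all a, b ∈ ε_K ℂ[G] ε_K) if and only if dim V^K ≤ 1 for every irreducible complex representation V of G. -/
/-!
`ε_K` acts on every representation `V` as the averaging projection `P` onto `V^K`, so `ε_K a ε_K`
acts as the corner element `P a P`; the corner `P · End(V) · P` is a copy of `End(V^K)`, which is
commutative exactly when `dim V^K ≤ 1`. If the Hecke algebra is commutative, Burnside's theorem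
(`ℂ[G] → End V` is onto for irreducible `V`) makes every such corner commutative. Conversely, if
`dim V^K ≤ 1` for every irreducible `V`, the commutator of two Hecke elements acts by zero on every
irreducible representation, hence on the semisimple regular representation, so it vanishes.
-/

open CategoryTheory

/-- The idempotent `ε_K = (1/|K|) ∑_{k ∈ K} 1_k` in the group algebra `ℂ[G]`.
The Hecke algebra `H(G,K)` is the set of elements `ε_K a ε_K` for `a ∈ ℂ[G]`. -/
noncomputable def heckeIdem {G : Type} [Group G] [Fintype G] (K : Subgroup G) :
    MonoidAlgebra ℂ G :=
  haveI : Fintype K := Fintype.ofFinite K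
  (Nat.card K : ℂ)⁻¹ • ∑ k : K, MonoidAlgebra.single (k : G) (1 : ℂ)

open Representation Module
open scoped MonoidAlgebra

universe u

section CornerAlgebra

variable {k V : Type*} [Field k] [AddCommGroup V] [Module k V]

theorem Module.End.forall_commute_iff_finrank_le_one [FiniteDimensional k V] :
    (∀ f g : Module.End k V, Commute f g) ↔ finrank k V ≤ 1 := by
  constructor
  · intro h
    by_contra! hlt
    let b := Module.finBasis k V
    let i : Fin (finrank k V) := ⟨0, by omega⟩
    let j : Fin (finrank k V) := ⟨1, hlt⟩
    have hij : i ≠ j := by simp [i, j, Fin.ext_iff]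
    -- the matrix units `E_ij` and `E_ji` do not commute
    have := LinearMap.congr_fun (h ((b.coord j).smulRight (b i)) ((b.coord i).smulRight (b j))).eq
      (b i)
    simp [hij.symm, b.ne_zero] at this
  · intro h f g
    rcases Nat.le_one_iff_eq_zero_or_eq_one.1 h with h0 | h1
    · have : Subsingleton V := Module.finrank_zero_iff.1 h0
      exact Subsingleton.elim _ _
    · obtain ⟨c, rfl, -⟩ := LinearMap.existsUnique_eq_smul_id_of_finrank_eq_one h1 f
      exact (Commute.one_left g).smul_left c

theorem LinearMap.IsProj.forall_commute_mul_mul_iff {W : Submodule k V} {P : Module.End k V}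
    (hP : LinearMap.IsProj W P) :
    (∀ f g : Module.End k V, Commute (P * f * P) (P * g * P)) ↔
      ∀ f g : Module.End k W, Commute f g := by
  let q := hP.codRestrict
  let Φ : Module.End k W → Module.End k V := fun h => W.subtype ∘ₗ h ∘ₗ q
  have hq : ∀ w : W, q w = w := hP.codRestrict_apply_cod
  have hqP : ∀ v, q (P v) = q v := fun v => hq ⟨P v, hP.map_mem v⟩
  have hΦ_mul : ∀ h h', Φ h * Φ h' = Φ (h * h') := fun h h' => by
    ext v; simp [Φ, hq]
  have hΦ_injective : Function.Injective Φ := fun h h' e => by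
    ext w; simpa [Φ, hq] using congr($e w)
  have hcorner : ∀ f, P * f * P = Φ (q ∘ₗ f ∘ₗ W.subtype) := fun f => by
    ext v; rfl
  have hΦ : ∀ h, P * Φ h * P = Φ h := fun h => by
    ext v; simp [Φ, hqP, hP.map_id _ (h _).2]
  constructor
  · intro H f g
    apply hΦ_injective
    rw [← hΦ_mul, ← hΦ_mul, ← hΦ f, ← hΦ g]
    exact H _ _
  · intro H f g
    rw [hcorner, hcorner]
    exact (hΦ_mul _ _).trans ((congrArg Φ (H _ _).eq).trans (hΦ_mul _ _).symm)

end CornerAlgebra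

theorem IsSimpleModule.lsmul_surjective_of_isAlgClosed (k : Type*) {A M : Type*} [Field k]
    [IsAlgClosed k] [Ring A] [Algebra k A] [AddCommGroup M] [Module k M] [Module A M]
    [IsScalarTower k A M] [IsSimpleModule A M] [FiniteDimensional k M] :
    Function.Surjective (Algebra.lsmul k k M : A →ₐ[k] Module.End k M) := by
  -- by Schur, every `k`-linear map is `End_A M`-linear, so Jacobson density applies
  have hscalar := (IsSimpleModule.algebraMap_end_bijective_of_isAlgClosed (A := A) (V := M) k).2
  have : Module.Finite (Module.End A M) M := Module.Finite.of_restrictScalars_finite k _ M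
  intro T
  let T' : Module.End (Module.End A M) M :=
    { T.toAddHom with
      map_smul' := fun φ m => by
        obtain ⟨c, rfl⟩ := hscalar φ
        simp }
  obtain ⟨r, hr⟩ := Module.Finite.toModuleEnd_moduleEnd_surjective (R := A) (M := M) T'
  exact ⟨r, LinearMap.ext fun m => congr($hr m)⟩

theorem IsSemisimpleModule.mem_annihilator_of_forall_isSimpleModule {R M : Type*} [Ring R]
    [AddCommGroup M] [Module R M] [IsSemisimpleModule R M] {r : R}
    (h : ∀ N : Submodule R M, IsSimpleModule R N → ∀ n ∈ N, r • n = 0) :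
    r ∈ Module.annihilator R M := by
  rw [← Submodule.annihilator_top, ← IsSemisimpleModule.sSup_simples_eq_top, sSup_eq_iSup',
    Submodule.annihilator_iSup, Submodule.mem_iInf]
  exact fun N => Submodule.mem_annihilator.2 (h N N.2)

namespace Representation

variable {k G : Type*} [Field k] [Group G] (M : Type*) [AddCommGroup M] [Module k M]
  [Module k[G] M] [IsScalarTower k k[G] M]

theorem asAlgebraHom_ofModule' :
    asAlgebraHom (ofModule' (k := k) (G := G) M) = Algebra.lsmul k k M := by
  rw [asAlgebraHom_def, ofModule']
  exact (MonoidAlgebra.lift k _ G).apply_symm_apply _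

noncomputable def ofModule'AsModuleEquiv : M ≃ₗ[k[G]] (ofModule' (k := k) (G := G) M).asModule where
  toFun m := m
  invFun m := m
  map_add' _ _ := rfl
  map_smul' a m := (congr($(asAlgebraHom_ofModule' M) a m)).symm
  left_inv _ := rfl
  right_inv _ := rfl

end Representation

namespace FDRep

variable {k G : Type u} [Field k] [Group G]

noncomputable def ofSubrepresentation {V : FDRep k G} (W : Subrepresentation V.ρ) : FDRep k G :=
  FDRep.of W.toRepresentation

noncomputable def subrepresentationι {V : FDRep k G} (W : Subrepresentation V.ρ) :
    ofSubrepresentation W ⟶ V :=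
  ⟨ConcreteCategory.ofHom W.toSubmodule.subtype, fun _ => rfl⟩

instance {V : FDRep k G} (W : Subrepresentation V.ρ) : Mono (subrepresentationι W) :=
  ConcreteCategory.mono_of_injective _ W.toSubmodule.injective_subtype

theorem nontrivial_of_simple (V : FDRep k G) [Simple V] : Nontrivial V := by
  by_contra h
  rw [not_nontrivial_iff_subsingleton] at h
  exact id_nonzero V (by ext v; exact Subsingleton.elim _ _)

theorem isIrreducible_of_simple (V : FDRep k G) [Simple V] : IsIrreducible V.ρ := by
  have := nontrivial_of_simple V
  have hbot_ne_top : (⊥ : Subrepresentation V.ρ) ≠ ⊤ := fun h => by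
    obtain ⟨v, hv⟩ := exists_ne (0 : V)
    exact hv (congrArg (v ∈ ·) h |>.mpr trivial)
  have : Nontrivial (Subrepresentation V.ρ) := ⟨⟨_, _, hbot_ne_top⟩⟩
  refine ⟨fun W => ?_⟩
  by_cases hW : W.toSubmodule = ⊥
  · exact Or.inl (Subrepresentation.toSubmodule_injective hW)
  right
  obtain ⟨w, hw, hw0⟩ := Submodule.exists_mem_ne_zero_of_ne_bot hW
  have hι : subrepresentationι W ≠ 0 := fun h => hw0 congr(($h).hom.hom ⟨w, hw⟩)
  have := isIso_of_mono_of_nonzero hι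
  refine Subrepresentation.toSubmodule_injective (eq_top_iff.2 fun v _ => ?_)
  obtain ⟨u, rfl⟩ := (ConcreteCategory.bijective_of_isIso (subrepresentationι W)).2 v
  exact u.2

theorem simple_of_isIrreducible (V : FDRep k G) [IsIrreducible V.ρ] : Simple V := by
  -- `Simple` descends along the faithful, mono-preserving functor `FDRep k G ⥤ ModuleCat k[G]`
  let F := forget₂ (FDRep k G) (Rep k G) ⋙ Rep.toModuleMonoidAlgebra
  have : IsSimpleModule k[G] (F.obj V) :=
    (irreducible_iff_isSimpleModule_asModule V.ρ).1 inferInstance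
  have : Simple (F.obj V) := (simple_iff_isSimpleModule' _).2 this
  exact F.simple_of_simple_obj V

theorem simple_iff_isIrreducible (V : FDRep k G) : Simple V ↔ IsIrreducible V.ρ :=
  ⟨fun _ => isIrreducible_of_simple V, fun _ => simple_of_isIrreducible V⟩

theorem simple_ofModule' (M : Type u) [AddCommGroup M] [Module k M] [Module k[G] M]
    [IsScalarTower k k[G] M] [Module.Finite k M] [IsSimpleModule k[G] M] :
    Simple (FDRep.of (ofModule' (k := k) (G := G) M)) := by
  have := IsSimpleModule.congr (ofModule'AsModuleEquiv (k := k) (G := G) M).symm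
  exact (simple_iff_isIrreducible _).2 ((irreducible_iff_isSimpleModule_asModule _).2 this)

theorem asAlgebraHom_surjective [IsAlgClosed k] (V : FDRep k G) [Simple V] :
    Function.Surjective (asAlgebraHom V.ρ) :=
  have := (irreducible_iff_isSimpleModule_asModule V.ρ).1 ((simple_iff_isIrreducible V).1 ‹_›)
  IsSimpleModule.lsmul_surjective_of_isAlgClosed k (A := k[G]) (M := Representation.asModule V.ρ)

end FDRep

theorem MonoidAlgebra.eq_zero_of_forall_simple_fdRep {k G : Type u} [Field k] [Group G]
    [Finite G] [NeZero (Nat.card G : k)] (x : k[G])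
    (h : ∀ V : FDRep k G, Simple V → asAlgebraHom V.ρ x = 0) : x = 0 := by
  have hx : x ∈ Module.annihilator k[G] k[G] :=
    IsSemisimpleModule.mem_annihilator_of_forall_isSimpleModule fun S hS s hs => by
      have := h _ (FDRep.simple_ofModule' S)
      simpa [asAlgebraHom_ofModule'] using congr($this ⟨s, hs⟩)
  simpa using Module.mem_annihilator.1 hx 1

theorem isProj_asAlgebraHom_heckeIdem {G : Type} [Group G] [Fintype G] (K : Subgroup G)
    {V : Type*} [AddCommGroup V] [Module ℂ V] (ρ : Representation ℂ G V) :
    LinearMap.IsProj (invariants (ρ.comp K.subtype)) (asAlgebraHom ρ (heckeIdem K)) := by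
  let : Fintype K := Fintype.ofFinite K
  let : Invertible (Fintype.card K : ℂ) := invertibleOfNonzero (by simp)
  convert isProj_averageMap (ρ.comp K.subtype)
  simp [heckeIdem, averageMap, GroupAlgebra.average, map_sum]

theorem stmt_1 {G : Type} [Group G] [Fintype G] (K : Subgroup G) :
    (∀ a b : MonoidAlgebra ℂ G,
        (heckeIdem K * a * heckeIdem K) * (heckeIdem K * b * heckeIdem K) =
          (heckeIdem K * b * heckeIdem K) * (heckeIdem K * a * heckeIdem K))
      ↔ ∀ V : FDRep ℂ G, Simple V →
          Module.finrank ℂ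
            (Representation.invariants (MonoidHom.comp V.ρ K.subtype)) ≤ 1 := by
  constructor
  · intro hcomm V hV
    have hP := isProj_asAlgebraHom_heckeIdem K V.ρ
    rw [← Module.End.forall_commute_iff_finrank_le_one, ← hP.forall_commute_mul_mul_iff]
    intro f g
    obtain ⟨a, rfl⟩ := FDRep.asAlgebraHom_surjective V f
    obtain ⟨b, rfl⟩ := FDRep.asAlgebraHom_surjective V g
    have := congr(asAlgebraHom V.ρ $(hcomm a b))
    simp only [map_mul] at this
    exact this
  · intro hdim a b
    rw [← sub_eq_zero]
    refine MonoidAlgebra.eq_zero_of_forall_simple_fdRep _ fun V hV => ?_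
    have hP := isProj_asAlgebraHom_heckeIdem K V.ρ
    have := hP.forall_commute_mul_mul_iff.2
      (Module.End.forall_commute_iff_finrank_le_one.2 (hdim V hV)) (asAlgebraHom V.ρ a)
      (asAlgebraHom V.ρ b)
    simpa only [map_sub, map_mul, sub_eq_zero] using this.eq
end

section
/- Let G be a finite group and K a subgroup. If KgK = Kg⁻¹K for all g ∈ G, then the Hecke algebra H(G,K) = ε_K ℂ[G] ε_K is commutative, i.e. ab = ba for all a, b ∈ ε_K ℂ[G] ε_K (Gelfand's trick). -/
theorem commute_of_antimul_fixed {R : Type*} [Mul R] (σ : R → R)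
    (hσ : ∀ x y, σ (x * y) = σ y * σ x) {a b : R} (ha : σ a = a) (hb : σ b = b)
    (hab : σ (a * b) = a * b) : Commute a b := by
  rw [Commute, SemiconjBy, ← hab, hσ, ha, hb]

theorem MonoidAlgebra.coeff_antipode {R G : Type*} [CommSemiring R] [Group G]
    (f : MonoidAlgebra R G) (g : G) : (HopfAlgebra.antipode R f).coeff g = f.coeff g⁻¹ := by
  classical
  induction f using MonoidAlgebra.induction_linear with
  | zero => simp
  | add f₁ f₂ h₁ h₂ => simp [h₁, h₂]
  | single x r => simp [Finsupp.single_apply, inv_eq_iff_eq_inv]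

open MonoidAlgebra HopfAlgebra

section Hecke

variable {G : Type} [Group G] [Fintype G] (K : Subgroup G)

noncomputable def heckeProj (a : MonoidAlgebra ℂ G) : MonoidAlgebra ℂ G :=
  heckeIdem K * a * heckeIdem K

theorem single_mul_heckeIdem {k : G} (hk : k ∈ K) :
    single k (1 : ℂ) * heckeIdem K = heckeIdem K := by
  let : Fintype K := Fintype.ofFinite K
  rw [heckeIdem, mul_smul_comm, Finset.mul_sum]
  congr 1
  exact Fintype.sum_equiv (Equiv.mulLeft ⟨k, hk⟩) _ _ fun x => by simp [single_mul_single]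

theorem heckeIdem_mul_single {k : G} (hk : k ∈ K) :
    heckeIdem K * single k (1 : ℂ) = heckeIdem K := by
  let : Fintype K := Fintype.ofFinite K
  rw [heckeIdem, smul_mul_assoc, Finset.sum_mul]
  congr 1
  exact Fintype.sum_equiv (Equiv.mulRight ⟨k, hk⟩) _ _ fun x => by simp [single_mul_single]

theorem heckeProj_mul_heckeProj (a b : MonoidAlgebra ℂ G) :
    heckeProj K a * heckeProj K b = heckeProj K (a * heckeIdem K * heckeIdem K * b) := by
  simp only [heckeProj, mul_assoc]

theorem coeff_heckeProj_mul_mul (a : MonoidAlgebra ℂ G) {k₁ k₂ : G} (hk₁ : k₁ ∈ K)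
    (hk₂ : k₂ ∈ K) (g : G) : (heckeProj K a).coeff (k₁ * g * k₂) = (heckeProj K a).coeff g := by
  have hleft : single k₁ (1 : ℂ) * heckeProj K a = heckeProj K a := by
    rw [heckeProj, ← mul_assoc, ← mul_assoc, single_mul_heckeIdem K hk₁]
  have hright : heckeProj K a * single k₂ (1 : ℂ) = heckeProj K a := by
    rw [heckeProj, mul_assoc, heckeIdem_mul_single K hk₂]
  conv_lhs => rw [← hleft, ← hright]
  simp [coeff_single_mul_apply, coeff_mul_single_apply, mul_assoc]

theorem antipode_heckeProj
    (h : ∀ g : G, DoubleCoset.doubleCoset g (K : Set G) (K : Set G) =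
      DoubleCoset.doubleCoset g⁻¹ (K : Set G) (K : Set G))
    (a : MonoidAlgebra ℂ G) : antipode ℂ (heckeProj K a) = heckeProj K a := by
  ext g
  have hinv : g⁻¹ ∈ DoubleCoset.doubleCoset g (K : Set G) (K : Set G) := by
    rw [h g]
    exact DoubleCoset.mem_doubleCoset_self K K g⁻¹
  obtain ⟨k₁, hk₁, k₂, hk₂, hg⟩ := DoubleCoset.mem_doubleCoset.mp hinv
  rw [coeff_antipode, hg, coeff_heckeProj_mul_mul K a hk₁ hk₂]

end Hecke

/-- Gelfand's trick: if `KgK = Kg⁻¹K` for all `g ∈ G`, then the Hecke algebra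
`H(G,K) = ε_K ℂ[G] ε_K` is commutative. -/
theorem stmt_2 {G : Type} [Group G] [Fintype G] (K : Subgroup G)
    (h : ∀ g : G, DoubleCoset.doubleCoset g (K : Set G) (K : Set G) =
      DoubleCoset.doubleCoset g⁻¹ (K : Set G) (K : Set G)) :
    ∀ a b : MonoidAlgebra ℂ G,
      (heckeIdem K * a * heckeIdem K) * (heckeIdem K * b * heckeIdem K) =
        (heckeIdem K * b * heckeIdem K) * (heckeIdem K * a * heckeIdem K) := by
  intro a b
  refine commute_of_antimul_fixed (antipode ℂ) antipode_mul_antidistrib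
    (antipode_heckeProj K h a) (antipode_heckeProj K h b) ?_
  change antipode ℂ (heckeProj K a * heckeProj K b) = heckeProj K a * heckeProj K b
  rw [heckeProj_mul_heckeProj]
  exact antipode_heckeProj K h _
end

section
/- Let G be a finite group and K a subgroup. Then |G| · #{double cosets KxK with x⁻¹ ∈ KxK} = #{(Kx, g) ∈ (K\G) × G : xg² ∈ Kx}, i.e. the number of self-inverse double cosets of K in G equals (1/|G|) times the number of pairs (Kx, g) of a right coset Kx and an element g ∈ G such that xg² ∈ Kx. -/
/-!
Write `S = {z ∈ G | z² ∈ K}` and count the pairs `(x, g) ∈ G × G` with `x g² x⁻¹ ∈ K` in two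
ways. Since the condition only depends on the coset `Kx`, they lie `|K|`-to-one over the pairs
`(Kx, g)`; replacing `g` by its conjugate `x g x⁻¹` identifies them with `G × S`. So it remains
to see `|S| = |K| · #{self-inverse double cosets}`. If `z² ∈ K` then `z⁻¹ = (z²)⁻¹ z ∈ KzK`,
and conversely every self-inverse double coset has a representative `y` with `y² ∈ K`. Finally
a double coset `KyK` with `y² ∈ K` contains exactly `|K|` elements of `S`.
-/

open QuotientGroup

theorem Nat.card_eq_card_mul_of_card_fiber {α β : Type*} [Finite α] [Finite β] (f : α → β)
    {n : ℕ} (h : ∀ b, Nat.card {a // f a = b} = n) : Nat.card α = Nat.card β * n := by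
  have := Fintype.ofFinite β
  rw [Nat.card_congr (Equiv.sigmaFiberEquiv f).symm, Nat.card_sigma]
  simp [h, mul_comm]

theorem Nat.card_subtype_comp_eq_mul {α β : Type*} [Finite α] [Finite β] (f : α → β)
    {n : ℕ} (h : ∀ b, Nat.card {a // f a = b} = n) (Q : β → Prop) :
    Nat.card {a // Q (f a)} = Nat.card {b // Q b} * n := by
  refine Nat.card_eq_card_mul_of_card_fiber (fun a => ⟨f a.1, a.2⟩) fun b => ?_
  rw [← h b]
  exact Nat.card_congr <| (Equiv.subtypeEquivRight fun a => Subtype.ext_iff).trans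
    (Equiv.subtypeSubtypeEquivSubtype (q := fun a => f a = b) fun hab => hab ▸ b.2)

section

variable {G : Type*} [Group G] (K : Subgroup G)

theorem card_rightRel_class (x₀ : G) :
    Nat.card {x : G // Quotient.mk (rightRel K) x = Quotient.mk (rightRel K) x₀} = Nat.card K :=
  Nat.card_congr <| (Equiv.subtypeEquivRight fun x => by
    rw [Quotient.eq, rightRel_apply, ← inv_mem_iff, mul_inv_rev, inv_inv]
    exact (mem_rightCoset_iff x₀).symm).trans (Subgroup.rightCosetEquivSubgroup x₀)

theorem card_rightRel_prod_fiber {β : Type*} (q : Quotient (rightRel K) × β) :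
    Nat.card {p : G × β // (Quotient.mk (rightRel K) p.1, p.2) = q} = Nat.card K := by
  obtain ⟨⟨x₀⟩, b⟩ := q
  rw [← card_rightRel_class K x₀]
  exact Nat.card_congr
    { toFun := fun p => ⟨p.1.1, (Prod.ext_iff.1 p.2).1⟩
      invFun := fun x => ⟨(x.1, b), Prod.ext x.2 rfl⟩
      left_inv := by rintro ⟨⟨x, b'⟩, h⟩; obtain rfl := (Prod.ext_iff.1 h).2; rfl
      right_inv := fun _ => rfl }

theorem exists_mk_eq_mul_sq_eq_mul_iff (x g : G) :
    (∃ x', Quotient.mk (rightRel K) x' = Quotient.mk (rightRel K) x ∧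
        ∃ k ∈ K, x' * g ^ 2 = k * x') ↔ (x * g * x⁻¹) ^ 2 ∈ K := by
  rw [conj_pow]
  constructor
  · rintro ⟨x', hx', k, hk, hxk⟩
    have hc : x * x'⁻¹ ∈ K := rightRel_apply.1 (Quotient.exact hx')
    have : x * g ^ 2 * x⁻¹ = (x * x'⁻¹) * k * (x * x'⁻¹)⁻¹ := by
      rw [eq_mul_inv_iff_mul_eq, ← mul_inv_cancel_right k x', ← hxk]; group
    rw [this]
    exact K.mul_mem (K.mul_mem hc hk) (K.inv_mem hc)
  · intro h
    exact ⟨x, rfl, _, h, by group⟩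

theorem card_conj_sq_mem [Finite G] :
    Nat.card {p : G × G // (p.1 * p.2 * p.1⁻¹) ^ 2 ∈ K} =
      Nat.card G * Nat.card {z : G // z ^ 2 ∈ K} := by
  have := Fintype.ofFinite G
  rw [Nat.card_congr (Equiv.subtypeProdEquivSigmaSubtype fun x g => (x * g * x⁻¹) ^ 2 ∈ K),
    Nat.card_sigma, Nat.card_eq_fintype_card (α := G), ← Finset.card_univ, ← smul_eq_mul,
    ← Finset.sum_const]
  exact Finset.sum_congr rfl fun x _ =>
    Nat.card_congr <| (MulAut.conj x).toEquiv.subtypeEquiv fun _ => Iff.rfl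

theorem card_mul_mul_eq_of_mk_eq {y z : G} (hz : DoubleCoset.mk K K z = DoubleCoset.mk K K y) :
    Nat.card {p : K × K // (p.1 : G) * y * p.2 = z} =
      Nat.card (K ⊓ K.comap (MulAut.conj y).toMonoidHom :) := by
  obtain ⟨a₀, ha₀, b₀, hb₀, rfl⟩ := (DoubleCoset.eq K K y z).1 hz.symm
  refine Nat.card_congr
    { toFun := fun p => ⟨p.1.2 * b₀⁻¹, K.mul_mem p.1.2.2 (K.inv_mem hb₀), ?_⟩
      invFun := fun u => ⟨(⟨a₀ * (y * u * y⁻¹)⁻¹, K.mul_mem ha₀ (K.inv_mem u.2.2)⟩,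
        ⟨u * b₀, K.mul_mem u.2.1 hb₀⟩), by group⟩
      left_inv := ?_
      right_inv := fun u => Subtype.ext (by simp) }
  · obtain ⟨⟨⟨a, ha⟩, b⟩, hab⟩ := p
    have h : y * (b * b₀⁻¹) * y⁻¹ = a⁻¹ * a₀ := by
      calc _ = a⁻¹ * (a * y * b) * (y * b₀)⁻¹ := by group
        _ = a⁻¹ * a₀ := by rw [hab]; group
    simpa [h] using K.mul_mem (K.inv_mem ha) ha₀
  · rintro ⟨⟨a, b⟩, hab⟩
    have h : a₀ * (y * (b * b₀⁻¹) * y⁻¹)⁻¹ = a := by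
      calc _ = (a₀ * y * b₀) * (y * b)⁻¹ := by group
        _ = a := by rw [← hab]; group
    exact Subtype.ext (Prod.ext (Subtype.ext h) (Subtype.ext (by group)))

theorem sq_mul_mul_mem_iff {y a b : G} (hy : y ^ 2 ∈ K) (ha : a ∈ K) (hb : b ∈ K) :
    (a * y * b) ^ 2 ∈ K ↔ y * (b * a) * y⁻¹ ∈ K := by
  have : (a * y * b) ^ 2 = a * (y * (b * a) * y⁻¹ * y ^ 2) * b := by
    simp only [sq]; group
  rw [this, K.mul_mem_cancel_right hb, K.mul_mem_cancel_left ha, K.mul_mem_cancel_right hy]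

theorem card_sq_mem_of_mk_eq [Finite G] {y : G} (hy : y ^ 2 ∈ K) :
    Nat.card {z : G // z ^ 2 ∈ K ∧ DoubleCoset.mk K K z = DoubleCoset.mk K K y} =
      Nat.card K := by
  set H := K ⊓ K.comap (MulAut.conj y).toMonoidHom
  -- Double count `T`: its fibres over `KyK` have `|K ∩ y⁻¹Ky|` elements, and
  -- `(a, b) ↦ (ba, a)` identifies it with `(K ∩ y⁻¹Ky) × K`.
  let T := {p : K × K // ((p.1 : G) * y * p.2) ^ 2 ∈ K}
  have hT : Nat.card T = Nat.card H * Nat.card K := by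
    rw [← Nat.card_prod]
    refine Nat.card_congr
      { toFun := fun p => (⟨p.1.2 * p.1.1, K.mul_mem p.1.2.2 p.1.1.2,
          (sq_mul_mul_mem_iff K hy p.1.1.2 p.1.2.2).1 p.2⟩, p.1.1)
        invFun := fun u => ⟨(u.2, ⟨u.1 * u.2⁻¹, K.mul_mem u.1.2.1 (K.inv_mem u.2.2)⟩),
          (sq_mul_mul_mem_iff K hy u.2.2 (K.mul_mem u.1.2.1 (K.inv_mem u.2.2))).2
            (by simpa using u.1.2.2)⟩
        left_inv := fun p => Subtype.ext (Prod.ext rfl (Subtype.ext (by simp)))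
        right_inv := fun u => Prod.ext (Subtype.ext (by simp)) rfl }
  have hfib : Nat.card T = Nat.card {z : G // z ^ 2 ∈ K ∧
      DoubleCoset.mk K K z = DoubleCoset.mk K K y} * Nat.card H := by
    refine Nat.card_eq_card_mul_of_card_fiber (fun p => ⟨p.1.1 * y * p.1.2, p.2,
      ((DoubleCoset.eq K K _ _).2 ⟨_, p.1.1.2, _, p.1.2.2, rfl⟩).symm⟩) fun z => ?_
    rw [← card_mul_mul_eq_of_mk_eq K z.2.2]
    exact Nat.card_congr <| (Equiv.subtypeEquivRight fun p => Subtype.ext_iff).trans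
      (Equiv.subtypeSubtypeEquivSubtype (q := fun p : K × K => (p.1 : G) * y * p.2 = z)
        fun h => h ▸ z.2.1)
  exact Nat.eq_of_mul_eq_mul_right Nat.card_pos (hfib.symm.trans (hT.trans (mul_comm _ _)))

theorem exists_sq_mem_of_inv_mem_doubleCoset {x : G}
    (h : x⁻¹ ∈ DoubleCoset.doubleCoset x (K : Set G) K) :
    ∃ y, y ^ 2 ∈ K ∧ DoubleCoset.mk K K y = DoubleCoset.mk K K x := by
  obtain ⟨k₁, hk₁, k₂, hk₂, hx⟩ := DoubleCoset.mem_doubleCoset.1 h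
  refine ⟨x * k₂, ?_, ((DoubleCoset.eq K K _ _).2 ⟨1, K.one_mem, k₂, hk₂, by group⟩).symm⟩
  have : (x * k₂) ^ 2 = k₁⁻¹ * k₂ := by
    calc (x * k₂) ^ 2 = k₁⁻¹ * (k₁ * x * k₂) * x * k₂ := by
          simp only [sq]; group
      _ = k₁⁻¹ * k₂ := by rw [← hx]; group
  exact this ▸ K.mul_mem (K.inv_mem hk₁) hk₂

theorem inv_mem_doubleCoset_of_sq_mem {z : G} (h : z ^ 2 ∈ K) :
    z⁻¹ ∈ DoubleCoset.doubleCoset z (K : Set G) K :=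
  DoubleCoset.mem_doubleCoset.2 ⟨(z ^ 2)⁻¹, K.inv_mem h, 1, K.one_mem, by group⟩

theorem card_sq_mem [Finite G] :
    Nat.card {z : G // z ^ 2 ∈ K} =
      Nat.card {q : DoubleCoset.Quotient (K : Set G) (K : Set G) //
        ∃ x : G, DoubleCoset.mk K K x = q ∧
          x⁻¹ ∈ DoubleCoset.doubleCoset x (K : Set G) K} *
      Nat.card K := by
  have : Finite (DoubleCoset.Quotient (K : Set G) K) := Quotient.finite _
  refine Nat.card_eq_card_mul_of_card_fiber
    (fun z => ⟨DoubleCoset.mk K K z, z.1, rfl, inv_mem_doubleCoset_of_sq_mem K z.2⟩) fun q => ?_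
  obtain ⟨x, hx, hinv⟩ := q.2
  obtain ⟨y, hy, hyx⟩ := exists_sq_mem_of_inv_mem_doubleCoset K hinv
  rw [← card_sq_mem_of_mk_eq K hy, hyx, hx]
  exact Nat.card_congr <| (Equiv.subtypeEquivRight fun _ => Subtype.ext_iff).trans
    (Equiv.subtypeSubtypeEquivSubtypeInter _ (fun z => DoubleCoset.mk K K z = q.1))

end

/-- Frame's lemma: `|G|` times the number of self-inverse double cosets `KxK`
(those with `x⁻¹ ∈ KxK`) equals the number of pairs `(Kx, g)` of a right coset `Kx`
and an element `g ∈ G` such that `xg² ∈ Kx`. -/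
theorem stmt_6 {G : Type} [Group G] [Fintype G] (K : Subgroup G) :
    Nat.card G *
        Nat.card {q : DoubleCoset.Quotient (K : Set G) (K : Set G) //
          ∃ x : G, DoubleCoset.mk K K x = q ∧
            x⁻¹ ∈ DoubleCoset.doubleCoset x (K : Set G) (K : Set G)}
      = Nat.card {p : Quotient (QuotientGroup.rightRel K) × G //
          ∃ x : G, Quotient.mk (QuotientGroup.rightRel K) x = p.1 ∧
            ∃ k ∈ K, x * p.2 ^ 2 = k * x} := by
  have hpairs := Nat.card_subtype_comp_eq_mul
    (fun p : G × G => (Quotient.mk (rightRel K) p.1, p.2)) (card_rightRel_prod_fiber K)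
    (fun p => ∃ x : G, Quotient.mk (rightRel K) x = p.1 ∧ ∃ k ∈ K, x * p.2 ^ 2 = k * x)
  simp only [exists_mk_eq_mul_sq_eq_mul_iff] at hpairs
  rw [card_conj_sq_mem, card_sq_mem, ← mul_assoc] at hpairs
  exact Nat.eq_of_mul_eq_mul_right Nat.card_pos hpairs
end

section
/- Let G be a finite group and d a positive integer. Then the number of real simultaneous conjugacy classes in G^d equals (1/|G|) ∑_{g∈G} r(g)^{d+1}, where r(g) = #{x ∈ G : x² = g} is the number of square roots of g in G. -/
/-!
Count the pairs `(g, x) ∈ G × G^d` with `g x g⁻¹ = x⁻¹` in two ways. For fixed `x` the admissible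
`g` form a coset of the centralizer of `x` if the class of `x` is real and are absent otherwise, so
by orbit–stabilizer every real class contributes exactly `|G|` pairs. For fixed `g`, each coordinate
`y` must satisfy `g y g⁻¹ = y⁻¹`, i.e. `(y g)² = g²`, which leaves `r(g²)^d` choices; grouping the
`g` by their square `h` turns `∑_g r(g²)^d` into `∑_h r(h)^{d+1}`.
-/

open MulAction

namespace MulAction

variable {A β : Type*} [Group A] [MulAction A β]

theorem card_transporter_eq_card_stabilizer {x y : β} (h : y ∈ orbit A x) :
    Nat.card {g : A // g • x = y} = Nat.card (stabilizer A x) := by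
  obtain ⟨g₀, rfl⟩ := h
  exact Nat.card_congr
    { toFun g := ⟨g₀⁻¹ * g, by rw [mem_stabilizer_iff, mul_smul, g.2, inv_smul_smul]⟩
      invFun s := ⟨g₀ * s, by rw [mul_smul, mem_stabilizer_iff.mp s.2]⟩
      left_inv g := by simp
      right_inv s := by simp }

theorem card_transporter_mul_card_orbit [Finite A] {x y : β} (h : y ∈ orbit A x) :
    Nat.card {g : A // g • x = y} * Nat.card (orbit A x) = Nat.card A := by
  rw [card_transporter_eq_card_stabilizer h, Nat.card_coe_set_eq, ← index_stabilizer,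
    Subgroup.card_mul_index]

theorem card_transporter_eq_zero {x y : β} (h : y ∉ orbit A x) :
    Nat.card {g : A // g • x = y} = 0 :=
  @Nat.card_of_isEmpty _ ⟨fun g => h ⟨g.1, g.2⟩⟩

theorem quotient_mk_apply_eq_of_mk_eq {f : β → β} (hf : ∀ (g : A) x, f (g • x) = g • f x)
    {x x' : β} (h : Quotient.mk (orbitRel A β) x = Quotient.mk (orbitRel A β) x') :
    Quotient.mk (orbitRel A β) (f x) = Quotient.mk (orbitRel A β) (f x') := by
  obtain ⟨g, rfl⟩ := orbitRel_apply.mp (Quotient.eq.mp h)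
  rw [hf]
  exact orbitRel.Quotient.quotient_smul_eq

variable [Fintype β] [Finite A] {f : β → β}

open scoped Classical in
theorem sum_card_transporter_over_orbit (hf : ∀ (g : A) x, f (g • x) = g • f x)
    (ω : orbitRel.Quotient A β) :
    ∑ x with Quotient.mk (orbitRel A β) x = ω, Nat.card {g : A // g • x = f x}
      = if ∀ x, Quotient.mk (orbitRel A β) x = ω → Quotient.mk (orbitRel A β) (f x) = ω
        then Nat.card A else 0 := by
  obtain ⟨x₀, rfl⟩ := Quotient.exists_rep ω
  have mem_fiber {x : β} : Quotient.mk (orbitRel A β) x = Quotient.mk _ x₀ ↔ x ∈ orbit A x₀ :=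
    Quotient.eq.trans orbitRel_apply
  split_ifs with hstable
  · set fiber := ({x | Quotient.mk (orbitRel A β) x = Quotient.mk _ x₀} : Finset β)
    have card_fiber : fiber.card = Nat.card (orbit A x₀) := by
      rw [Nat.card_eq_fintype_card, Fintype.card_subtype]
      simp only [fiber, mem_fiber]
    have term_mul_card : ∀ x ∈ fiber, Nat.card {g : A // g • x = f x} * fiber.card
        = Nat.card A := by
      intro x hx
      have hx : x ∈ orbit A x₀ := mem_fiber.mp (Finset.mem_filter.mp hx).2
      rw [card_fiber, ← orbit_eq_iff.mpr hx]
      refine card_transporter_mul_card_orbit (orbitRel_apply.mp (Quotient.eq.mp ?_))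
      rw [hstable x (mem_fiber.mpr hx), mem_fiber.mpr hx]
    have fiber_nonempty : 0 < fiber.card :=
      Finset.card_pos.mpr ⟨x₀, Finset.mem_filter.mpr ⟨Finset.mem_univ _, rfl⟩⟩
    refine Nat.eq_of_mul_eq_mul_right fiber_nonempty ?_
    rw [Finset.sum_mul, Finset.sum_congr rfl term_mul_card, Finset.sum_const, smul_eq_mul,
      mul_comm]
  · refine Finset.sum_eq_zero fun x hx => card_transporter_eq_zero fun hfx => hstable ?_
    have hx : Quotient.mk (orbitRel A β) x = Quotient.mk _ x₀ := (Finset.mem_filter.mp hx).2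
    intro x' hx'
    rw [quotient_mk_apply_eq_of_mk_eq hf (hx'.trans hx.symm), ← hx]
    exact Quotient.sound (orbitRel_apply.mpr hfx)

theorem sum_card_transporter_eq_card_mul_card_stable_orbits
    (hf : ∀ (g : A) x, f (g • x) = g • f x) :
    ∑ x, Nat.card {g : A // g • x = f x}
      = Nat.card A * Nat.card {ω : orbitRel.Quotient A β //
          ∀ x, Quotient.mk (orbitRel A β) x = ω → Quotient.mk (orbitRel A β) (f x) = ω} := by
  classical
  rw [← Finset.sum_fiberwise Finset.univ (Quotient.mk (orbitRel A β)),
    Finset.sum_congr rfl fun ω _ => sum_card_transporter_over_orbit hf ω, Finset.sum_ite,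
    Finset.sum_const_zero, add_zero, Finset.sum_const, smul_eq_mul, mul_comm,
    Nat.card_eq_fintype_card (α := Subtype _), Fintype.card_subtype]

end MulAction

theorem sum_card_subtype_comm {α β : Type*} [Fintype α] [Fintype β] (p : α → β → Prop) :
    ∑ a, Nat.card {b // p a b} = ∑ b, Nat.card {a // p a b} := by
  classical
  simp only [Nat.card_eq_fintype_card, Fintype.card_subtype, Finset.card_filter]
  exact Finset.sum_comm

theorem sum_comp_eq_sum_card_fiber_mul {α β : Type*} [Fintype α] [Fintype β] (φ : α → β)
    (F : β → ℕ) : ∑ a, F (φ a) = ∑ b, Nat.card {a // φ a = b} * F b := by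
  classical
  rw [← Finset.sum_fiberwise Finset.univ φ]
  refine Finset.sum_congr rfl fun b _ => ?_
  rw [Finset.sum_congr rfl fun a ha => congrArg F (Finset.mem_filter.mp ha).2, Finset.sum_const,
    smul_eq_mul, Nat.card_eq_fintype_card, Fintype.card_subtype]

section SquareRoots

variable {G : Type*} [Group G]

theorem ConjAct.toConjAct_smul_eq_inv_iff (a y : G) :
    ConjAct.toConjAct a • y = y⁻¹ ↔ (y * a) ^ 2 = a ^ 2 := by
  rw [ConjAct.toConjAct_smul, ← mul_right_inj y, ← mul_left_inj (a * a)]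
  simp only [pow_two, mul_assoc, inv_mul_cancel_left, mul_inv_cancel, one_mul]

theorem card_conjAct_smul_eq_inv {ι : Type*} [Fintype ι] (a : G) :
    Nat.card {x : ι → G // ConjAct.toConjAct a • x = x⁻¹}
      = Nat.card {y : G // y ^ 2 = a ^ 2} ^ Fintype.card ι := by
  have coordinatewise : {x : ι → G // ConjAct.toConjAct a • x = x⁻¹}
      ≃ (ι → {y : G // (y * a) ^ 2 = a ^ 2}) :=
    (Equiv.subtypeEquivRight fun x => by
      simp only [funext_iff, Pi.smul_apply, Pi.inv_apply, ConjAct.toConjAct_smul_eq_inv_iff]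
      ).trans Equiv.subtypePiEquivPi
  rw [Nat.card_congr coordinatewise, Nat.card_fun, Nat.card_eq_fintype_card (α := ι)]
  exact congrArg (· ^ _) (Nat.card_congr (Equiv.subtypeEquiv (Equiv.mulRight a) fun _ => Iff.rfl))

end SquareRoots

theorem stmt_11_general {G : Type} [Group G] [Fintype G] (d : ℕ) :
    (Nat.card {c : MulAction.orbitRel.Quotient (ConjAct G) (Fin d → G) //
        ∀ x : Fin d → G,
          Quotient.mk (MulAction.orbitRel (ConjAct G) (Fin d → G)) x = c →
            Quotient.mk (MulAction.orbitRel (ConjAct G) (Fin d → G))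
              (fun i => (x i)⁻¹) = c} : ℚ)
      = (Fintype.card G : ℚ)⁻¹ *
          ∑ g : G, (Nat.card {x : G // x ^ 2 = g} : ℚ) ^ (d + 1) := by
  have count_by_group : ∑ x : Fin d → G, Nat.card {g : ConjAct G // g • x = x⁻¹}
      = ∑ g : G, Nat.card {x : G // x ^ 2 = g} ^ (d + 1) := by
    rw [sum_card_subtype_comm, ← ConjAct.toConjAct.toEquiv.sum_comp]
    simp only [MulEquiv.toEquiv_eq_coe, EquivLike.coe_coe, card_conjAct_smul_eq_inv,
      Fintype.card_fin]
    rw [sum_comp_eq_sum_card_fiber_mul (· ^ 2) fun g => Nat.card {x : G // x ^ 2 = g} ^ d]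
    simp only [pow_succ']
  have count_by_orbit := sum_card_transporter_eq_card_mul_card_stable_orbits
    (A := ConjAct G) (β := Fin d → G) (f := (·⁻¹)) fun g x => (smul_inv' g x).symm
  rw [count_by_group, Nat.card_eq_fintype_card (α := ConjAct G), ConjAct.card] at count_by_orbit
  rw [eq_inv_mul_iff_mul_eq₀ (by positivity)]
  exact_mod_cast count_by_orbit.symm

/-- The number of real simultaneous conjugacy classes in `G^d` equals
`(1/|G|) ∑_{g ∈ G} r(g)^{d+1}`, where `r(g) = #{x ∈ G : x² = g}` is the number of
square roots of `g` in `G`. -/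
theorem stmt_11 {G : Type} [Group G] [Fintype G] (d : ℕ) (hd : 0 < d) :
    (Nat.card {c : MulAction.orbitRel.Quotient (ConjAct G) (Fin d → G) //
        ∀ x : Fin d → G,
          Quotient.mk (MulAction.orbitRel (ConjAct G) (Fin d → G)) x = c →
            Quotient.mk (MulAction.orbitRel (ConjAct G) (Fin d → G))
              (fun i => (x i)⁻¹) = c} : ℚ)
      = (Fintype.card G : ℚ)⁻¹ *
          ∑ g : G, (Nat.card {x : G // x ^ 2 = g} : ℚ) ^ (d + 1) :=
  stmt_11_general d
end

section
/- Let G be a finite group. If G is 3-real, i.e. for every triple (g₁,g₂,g₃) ∈ G³ there exists g ∈ G with gg_ig⁻¹ = g_i⁻¹ for i = 1,2,3, then G is an elementary Abelian 2-group: G is Abelian and every element of G has order dividing 2. -/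
/-! Conjugating `a`, `b` and `a * b` simultaneously to their inverses gives
`a⁻¹ * b⁻¹ = (a * b)⁻¹ = b⁻¹ * a⁻¹`, so `G` is abelian; conjugation is then trivial,
so every element equals its inverse. -/

theorem commute_of_conj_eq_inv {G : Type*} [Group G] {g a b : G}
    (ha : g * a * g⁻¹ = a⁻¹) (hb : g * b * g⁻¹ = b⁻¹) (hab : g * (a * b) * g⁻¹ = (a * b)⁻¹) :
    Commute a b := by
  have hinv : a⁻¹ * b⁻¹ = b⁻¹ * a⁻¹ :=
    calc a⁻¹ * b⁻¹ = (g * a * g⁻¹) * (g * b * g⁻¹) := by rw [ha, hb]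
      _ = g * (a * b) * g⁻¹ := by group
      _ = b⁻¹ * a⁻¹ := by rw [hab, mul_inv_rev]
  exact Commute.inv_inv_iff.mp hinv

theorem orderOf_dvd_two_of_conj_eq_inv {G : Type*} [Group G] {g a : G}
    (hga : Commute g a) (ha : g * a * g⁻¹ = a⁻¹) : orderOf a ∣ 2 := by
  rw [hga.eq, mul_inv_cancel_right] at ha
  exact orderOf_dvd_of_pow_eq_one (by rw [pow_two, mul_eq_one_iff_eq_inv]; exact ha)

theorem stmt_12_general {G : Type} [Group G]
    (h : ∀ g₁ g₂ g₃ : G, ∃ g : G,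
      g * g₁ * g⁻¹ = g₁⁻¹ ∧ g * g₂ * g⁻¹ = g₂⁻¹ ∧ g * g₃ * g⁻¹ = g₃⁻¹) :
    (∀ a b : G, a * b = b * a) ∧ ∀ a : G, orderOf a ∣ 2 := by
  have comm : ∀ a b : G, Commute a b := fun a b => by
    obtain ⟨g, ha, hb, hab⟩ := h a b (a * b)
    exact commute_of_conj_eq_inv ha hb hab
  refine ⟨fun a b => (comm a b).eq, fun a => ?_⟩
  obtain ⟨g, ha, -, -⟩ := h a a a
  exact orderOf_dvd_two_of_conj_eq_inv (comm g a) ha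

/-- If a finite group `G` is `3`-real, i.e. every triple of elements is simultaneously
conjugate to its componentwise inverse, then `G` is an elementary Abelian `2`-group. -/
theorem stmt_12 {G : Type} [Group G] [Finite G]
    (h : ∀ g₁ g₂ g₃ : G, ∃ g : G,
      g * g₁ * g⁻¹ = g₁⁻¹ ∧ g * g₂ * g⁻¹ = g₂⁻¹ ∧ g * g₃ * g⁻¹ = g₃⁻¹) :
    (∀ a b : G, a * b = b * a) ∧ ∀ a : G, orderOf a ∣ 2 :=
  stmt_12_general h
end

section
/- Let A be an Abelian group and let D(A) = A ⋊ C₂ be the generalized dihedral group of A, where the nontrivial element s of the cyclic group C₂ of order 2 acts on A by s·a = a⁻¹. Then D(A) is doubly real: for every pair (u,v) ∈ D(A)² there exists g ∈ D(A) with gug⁻¹ = u⁻¹ and gvg⁻¹ = v⁻¹. -/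
/-- The action of the cyclic group `C₂` (realized as `Multiplicative (ZMod 2)`)
on an Abelian group `A`, where the nontrivial element acts by inversion `a ↦ a⁻¹`. -/
def dihedralPhi (A : Type) [CommGroup A] : Multiplicative (ZMod 2) →* MulAut A where
  toFun x := MulEquiv.inv A ^ (Multiplicative.toAdd x).val
  map_one' := by simp
  map_mul' x y := by
    have h2 : MulEquiv.inv A ^ (2 : ℕ) = 1 := by
      ext a
      simp [pow_succ]
    show MulEquiv.inv A ^ (Multiplicative.toAdd (x * y)).val =
      MulEquiv.inv A ^ (Multiplicative.toAdd x).val *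
        MulEquiv.inv A ^ (Multiplicative.toAdd y).val
    rw [toAdd_mul, ZMod.val_add, ← pow_eq_pow_mod _ h2, pow_add]

/-- The generalized dihedral group `D(A) = A ⋊ C₂`, where the nontrivial element of
`C₂` acts on the Abelian group `A` by inversion. -/
abbrev genDihedral (A : Type) [CommGroup A] :=
  SemidirectProduct A (Multiplicative (ZMod 2)) (dihedralPhi A)

def IsDoublyReal (G : Type*) [Group G] : Prop :=
  ∀ u v : G, ∃ g : G, g * u * g⁻¹ = u⁻¹ ∧ g * v * g⁻¹ = v⁻¹

/-- A pair inside `N` is inverted by any `s ∉ N`, a pair with one member `r ∉ N` by `r`, and a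
pair outside `N`, consisting of involutions, by `1`. -/
theorem isDoublyReal_of_involutions_invert {G : Type*} [Group G] (N : Set G) {s : G} (hs : s ∉ N)
    (mul_self : ∀ r ∉ N, r * r = 1) (conj : ∀ r ∉ N, ∀ t ∈ N, r * t * r⁻¹ = t⁻¹) :
    IsDoublyReal G := by
  have inv_eq : ∀ r ∉ N, r⁻¹ = r := fun r hr => inv_eq_of_mul_eq_one_right (mul_self r hr)
  have conj_self : ∀ r ∉ N, r * r * r⁻¹ = r⁻¹ := fun r hr => by
    rw [mul_inv_cancel_right, inv_eq r hr]
  intro u v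
  by_cases hu : u ∈ N <;> by_cases hv : v ∈ N
  · exact ⟨s, conj s hs u hu, conj s hs v hv⟩
  · exact ⟨v, conj v hv u hu, conj_self v hv⟩
  · exact ⟨u, conj_self u hu, conj u hu v hv⟩
  · exact ⟨1, by simp [inv_eq u hu], by simp [inv_eq v hv]⟩

namespace genDihedral

variable {A : Type} [CommGroup A]

lemma eq_ofAdd_one_of_ne_one {x : Multiplicative (ZMod 2)} (hx : x ≠ 1) :
    x = Multiplicative.ofAdd 1 := by
  revert x; decide

@[simp]
lemma dihedralPhi_ofAdd_one_apply (a : A) : dihedralPhi A (Multiplicative.ofAdd 1) a = a⁻¹ := by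
  simp [dihedralPhi, ZMod.val_one]

lemma mul_self_eq_one_of_right_ne_one {r : genDihedral A} (hr : r.right ≠ 1) : r * r = 1 := by
  obtain ⟨a, x⟩ := r
  obtain rfl := eq_ofAdd_one_of_ne_one hr
  ext
  · simp
  · simp only [SemidirectProduct.mul_right, SemidirectProduct.one_right]
    decide

lemma conj_eq_inv_of_right_ne_one {r t : genDihedral A} (hr : r.right ≠ 1) (ht : t.right = 1) :
    r * t * r⁻¹ = t⁻¹ := by
  obtain ⟨a, x⟩ := r
  rw [inv_eq_of_mul_eq_one_right (mul_self_eq_one_of_right_ne_one hr)]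
  obtain ⟨b, y⟩ := t
  obtain rfl := eq_ofAdd_one_of_ne_one hr
  subst ht
  ext
  · simp [mul_comm]
  · rfl

theorem isDoublyReal : IsDoublyReal (genDihedral A) :=
  isDoublyReal_of_involutions_invert {g | g.right = 1} (s := ⟨1, Multiplicative.ofAdd 1⟩)
    (by simp) (fun _ hr => mul_self_eq_one_of_right_ne_one hr)
    (fun _ hr _ ht => conj_eq_inv_of_right_ne_one hr ht)

end genDihedral

/-- The generalized dihedral group `D(A)` of an Abelian group `A` is doubly real:
every pair of elements is simultaneously conjugate to its pair of inverses. -/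
theorem stmt_15 (A : Type) [CommGroup A] :
    ∀ u v : genDihedral A, ∃ g : genDihedral A,
      g * u * g⁻¹ = u⁻¹ ∧ g * v * g⁻¹ = v⁻¹ :=
  genDihedral.isDoublyReal
end
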